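/- Let s_p, s_q, s_r be three segments in the upper half-plane, each with one endpoint on the x-axis, such that: (i) their grounded endpoints appear on the x-axis in the order s_p, s_q, s_r; (ii) the x-coordinates of their free (non-grounded) endpoints are increasing in the order s_p, s_q, s_r; (iii) the y-coordinates of their free endpoints are monotone (all increasing or all decreasing) in the order s_p, s_q, s_r. If s_p and s_r intersect but s_q intersects neither s_p nor s_r, then a contradiction follows; i.e., under (i)–(iii), if s_p ∩ s_r ≠ ∅ then s_q intersects s_p or s_r. -/

import Mathlib

/-!
Let `z` be a common point of `s_p` and `s_r`. By the monotonicity of the free heights, `s_q` reaches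
the height `z 1`, so it passes at that height either weakly left of `z` or strictly right of it.
Its grounded endpoint lies strictly between those of `s_p` and `s_r`, so in the first case `s_q`
moves from the right of `s_p` to its left between heights `0` and `z 1`, and in the second from the
left of `s_r` to its right; the intermediate value theorem gives the crossing point.
-/

/-- The grounded point `(x, 0)`. -/
noncomputable def gpt (x : ℝ) : EuclideanSpace ℝ (Fin 2) := WithLp.toLp 2 ![x, 0]

/-- The grounded segment with grounded endpoint `(x,0)` and free endpoint `f`. -/
noncomputable def GSeg (x : ℝ) (f : EuclideanSpace ℝ (Fin 2)) :
    Set (EuclideanSpace ℝ (Fin 2)) := segment ℝ (gpt x) f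

namespace GSeg

noncomputable def xAt (x : ℝ) (f : EuclideanSpace ℝ (Fin 2)) (y : ℝ) : ℝ := x + y / f 1 * (f 0 - x)

lemma mem_iff {x : ℝ} {f z : EuclideanSpace ℝ (Fin 2)} :
    z ∈ GSeg x f ↔ ∃ t ∈ Set.Icc (0 : ℝ) 1, z 0 = x + t * (f 0 - x) ∧ z 1 = t * f 1 := by
  simp only [GSeg, segment_eq_image_lineMap, Set.mem_image]
  refine exists_congr fun t => and_congr_right fun _ => ?_
  rw [eq_comm, PiLp.ext_iff, Fin.forall_fin_two]
  simp [AffineMap.lineMap_apply_module', gpt, add_comm x]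

lemma mem_iff_xAt {x : ℝ} {f z : EuclideanSpace ℝ (Fin 2)} (hf : 0 < f 1) :
    z ∈ GSeg x f ↔ z 1 ∈ Set.Icc 0 (f 1) ∧ z 0 = xAt x f (z 1) := by
  rw [mem_iff]
  constructor
  · rintro ⟨t, ⟨ht0, ht1⟩, hz0, hz1⟩
    refine ⟨⟨hz1 ▸ by positivity, by nlinarith⟩, ?_⟩
    rw [xAt, hz0, hz1, mul_div_cancel_right₀ _ hf.ne']
  · rintro ⟨⟨hz0, hz1⟩, hx⟩
    refine ⟨z 1 / f 1, ⟨by positivity, div_le_one_of_le₀ hz1 hf.le⟩, hx, ?_⟩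
    rw [div_mul_cancel₀ _ hf.ne']

lemma mk_mem {x y : ℝ} {f : EuclideanSpace ℝ (Fin 2)} (hf : 0 < f 1) (hy : y ∈ Set.Icc 0 (f 1)) :
    WithLp.toLp 2 ![xAt x f y, y] ∈ GSeg x f :=
  (mem_iff_xAt hf).2 ⟨hy, rfl⟩

lemma continuous_xAt (x : ℝ) (f : EuclideanSpace ℝ (Fin 2)) : Continuous (xAt x f) := by
  unfold xAt; fun_prop

lemma inter_nonempty_of_cross {a b h : ℝ} {f g : EuclideanSpace ℝ (Fin 2)}
    (hf : 0 < f 1) (hg : 0 < g 1) (h0 : 0 ≤ h) (hhf : h ≤ f 1) (hhg : h ≤ g 1)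
    (hab : a ≤ b) (hcross : xAt b g h ≤ xAt a f h) : (GSeg a f ∩ GSeg b g).Nonempty := by
  have hcont : ContinuousOn (fun y => xAt b g y - xAt a f y) (Set.Icc 0 h) :=
    ((continuous_xAt b g).sub (continuous_xAt a f)).continuousOn
  have hzero : (0 : ℝ) ∈ Set.Icc (xAt b g h - xAt a f h) (xAt b g 0 - xAt a f 0) := by
    refine ⟨by linarith, ?_⟩
    simpa [xAt] using hab
  obtain ⟨y, ⟨hy0, hyh⟩, hy⟩ := intermediate_value_Icc' h0 hcont hzero
  refine ⟨WithLp.toLp 2 ![xAt a f y, y], mk_mem hf ⟨hy0, hyh.trans hhf⟩, ?_⟩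
  rw [← sub_eq_zero.1 hy]
  exact mk_mem hg ⟨hy0, hyh.trans hhg⟩

end GSeg

theorem stmt_11_general
    (xp xq xr : ℝ) (fp fq fr : EuclideanSpace ℝ (Fin 2))
    (hfp : fp 1 > 0) (hfq : fq 1 > 0) (hfr : fr 1 > 0)
    (hground : xp < xq ∧ xq < xr)
    (hfreey : (fp 1 < fq 1 ∧ fq 1 < fr 1) ∨ (fr 1 < fq 1 ∧ fq 1 < fp 1))
    (hpr : (GSeg xp fp ∩ GSeg xr fr).Nonempty) :
    (GSeg xq fq ∩ GSeg xp fp).Nonempty ∨ (GSeg xq fq ∩ GSeg xr fr).Nonempty := by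
  obtain ⟨z, hzp, hzr⟩ := hpr
  obtain ⟨⟨hz0, hzp1⟩, hzp0⟩ := (GSeg.mem_iff_xAt hfp).1 hzp
  obtain ⟨⟨-, hzr1⟩, hzr0⟩ := (GSeg.mem_iff_xAt hfr).1 hzr
  have hzq1 : z 1 ≤ fq 1 := by rcases hfreey with ⟨h1, -⟩ | ⟨h1, -⟩ <;> linarith
  rcases le_or_gt (GSeg.xAt xq fq (z 1)) (z 0) with hle | hlt
  · left
    rw [Set.inter_comm]
    exact GSeg.inter_nonempty_of_cross hfp hfq hz0 hzp1 hzq1 hground.1.le (hzp0 ▸ hle)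
  · right
    exact GSeg.inter_nonempty_of_cross hfq hfr hz0 hzq1 hzr1 hground.2.le (hzr0 ▸ hlt.le)

theorem stmt_11
    (xp xq xr : ℝ) (fp fq fr : EuclideanSpace ℝ (Fin 2))
    (hfp : fp 1 > 0) (hfq : fq 1 > 0) (hfr : fr 1 > 0)
    (hground : xp < xq ∧ xq < xr)
    (hfreex : fp 0 < fq 0 ∧ fq 0 < fr 0)
    (hfreey : (fp 1 < fq 1 ∧ fq 1 < fr 1) ∨ (fr 1 < fq 1 ∧ fq 1 < fp 1))
    (hpr : (GSeg xp fp ∩ GSeg xr fr).Nonempty) :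
    (GSeg xq fq ∩ GSeg xp fp).Nonempty ∨ (GSeg xq fq ∩ GSeg xr fr).Nonempty :=
  stmt_11_general xp xq xr fp fq fr hfp hfq hfr hground hfreey hpr
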